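/- Let f be an L_p-nested function on ℝⁿ and ϱ a probability density on ℝ₊. Then the function ρ(x) = ϱ(f(x)) / (f(x)^{n−1} S_f(1)) integrates to 1 over ℝⁿ, where S_f(1) is the surface area (derivative at R = 1 of the volume of {f ≤ R}) of the unit L_p-nested sphere. -/

import Mathlib

open Real MeasureTheory

inductive LpTree : Type
  | leaf : LpTree
  | node : ℝ → List LpTree → LpTree

namespace LpTree

mutual
/-- Number of leaves (= dimension) of an `L_p`-nested tree. -/
def numLeaves : LpTree → ℕ
  | leaf => 1
  | node _ cs => numLeavesList cs

def numLeavesList : List LpTree → ℕ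
  | [] => 0
  | c :: cs => numLeaves c + numLeavesList cs
end

mutual
/-- Evaluation of an `L_p`-nested function on coordinates `x 0, x 1, ...`. -/
noncomputable def eval : LpTree → (ℕ → ℝ) → ℝ
  | .leaf, x => |x 0|
  | .node p cs, x => (evalSum p cs x) ^ (1 / p)

noncomputable def evalSum : ℝ → List LpTree → (ℕ → ℝ) → ℝ
  | _, [], _ => 0
  | p, c :: cs, x => (eval c x) ^ p + evalSum p cs (fun i => x (i + c.numLeaves))
end

/-- Well-formedness: every inner node has a positive exponent and at least one child. -/
inductive WF : LpTree → Prop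
  | leaf : WF .leaf
  | node (p : ℝ) (cs : List LpTree) (hp : 0 < p) (hcs : cs ≠ [])
      (h : ∀ c ∈ cs, WF c) : WF (.node p cs)

/-- The `L_p`-nested function as a function on `ℝⁿ`, `n = t.numLeaves`. -/
noncomputable def evalFin (t : LpTree) (x : Fin t.numLeaves → ℝ) : ℝ :=
  t.eval (fun i => if h : i < t.numLeaves then x ⟨i, h⟩ else 0)


theorem wf_node_elim {p : ℝ} {cs : List LpTree} (h : WF (.node p cs)) :
    0 < p ∧ cs ≠ [] ∧ ∀ c ∈ cs, WF c := by
  cases h with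
  | node _ _ hp hcs hw => exact ⟨hp, hcs, hw⟩

mutual
theorem eval_nonneg : ∀ (t : LpTree) (x : ℕ → ℝ), 0 ≤ eval t x
  | .leaf, x => abs_nonneg _
  | .node p cs, x => Real.rpow_nonneg (evalSum_nonneg p cs x) _

theorem evalSum_nonneg : ∀ (p : ℝ) (cs : List LpTree) (x : ℕ → ℝ), 0 ≤ evalSum p cs x
  | _, [], _ => le_refl 0
  | p, c :: cs, x => add_nonneg (Real.rpow_nonneg (eval_nonneg c x) p)
      (evalSum_nonneg p cs _)
end

mutual
theorem eval_smul : ∀ (t : LpTree), t.WF → ∀ (c : ℝ), 0 ≤ c → ∀ (x : ℕ → ℝ),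
    eval t (fun i => c * x i) = c * eval t x
  | .leaf, _, c, hc, x => by
      simp [eval, abs_mul, abs_of_nonneg hc]
  | .node p cs, hwf, c, hc, x => by
      obtain ⟨hp, hcs, h⟩ := wf_node_elim hwf
      have hne : p ≠ 0 := ne_of_gt hp
      rw [eval, eval, evalSum_smul p hp cs h c hc x,
        Real.mul_rpow (Real.rpow_nonneg hc p) (evalSum_nonneg p cs x),
        ← Real.rpow_mul hc, mul_one_div, div_self hne, Real.rpow_one]
theorem evalSum_smul : ∀ (p : ℝ), 0 < p → ∀ (cs : List LpTree), (∀ c ∈ cs, WF c) →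
    ∀ (c : ℝ), 0 ≤ c → ∀ (x : ℕ → ℝ),
    evalSum p cs (fun i => c * x i) = c ^ p * evalSum p cs x
  | p, hp, [], _, c, hc, x => by simp [evalSum]
  | p, hp, t :: cs, h, c, hc, x => by
      rw [evalSum, evalSum, eval_smul t (h t (by simp)) c hc x,
        Real.mul_rpow hc (eval_nonneg t x),
        evalSum_smul p hp cs (fun c hc => h c (by simp [hc])) c hc (fun i => x (i + t.numLeaves)),
        mul_add]
end

mutual
theorem eval_eq_zero : ∀ (t : LpTree), t.WF → ∀ (x : ℕ → ℝ), eval t x = 0 →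
    ∀ i < t.numLeaves, x i = 0
  | .leaf, _, x, h, i, hi => by
      have h0 : i = 0 := by simp [numLeaves] at hi; omega
      subst h0
      simpa [eval, abs_eq_zero] using h
  | .node p cs, hwf, x, h, i, hi => by
      obtain ⟨hp, hcs, hw⟩ := wf_node_elim hwf
      rw [eval] at h
      have hS : evalSum p cs x = 0 := by
        have := (Real.rpow_eq_zero (evalSum_nonneg p cs x) (by positivity : (1:ℝ)/p ≠ 0)).1 h
        exact this
      exact evalSum_eq_zero p hp cs hw x hS i hi
theorem evalSum_eq_zero : ∀ (p : ℝ), 0 < p → ∀ (cs : List LpTree), (∀ c ∈ cs, WF c) →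
    ∀ (x : ℕ → ℝ), evalSum p cs x = 0 → ∀ i < numLeavesList cs, x i = 0
  | p, hp, [], _, x, h, i, hi => by simp [numLeavesList] at hi
  | p, hp, t :: cs, hw, x, h, i, hi => by
      rw [evalSum] at h
      have h1 : (eval t x) ^ p = 0 ∧ evalSum p cs (fun i => x (i + t.numLeaves)) = 0 := by
        constructor
        · nlinarith [Real.rpow_nonneg (eval_nonneg t x) p, evalSum_nonneg p cs (fun i => x (i + t.numLeaves))]
        · nlinarith [Real.rpow_nonneg (eval_nonneg t x) p, evalSum_nonneg p cs (fun i => x (i + t.numLeaves))]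
      have he : eval t x = 0 := (Real.rpow_eq_zero (eval_nonneg t x) (ne_of_gt hp)).1 h1.1
      rw [numLeavesList] at hi
      by_cases hc : i < t.numLeaves
      · exact eval_eq_zero t (hw t (by simp)) x he i hc
      · have := evalSum_eq_zero p hp cs (fun c hc => hw c (by simp [hc])) _ h1.2 (i - t.numLeaves) (by omega)
        simpa [Nat.sub_add_cancel (not_lt.1 hc)] using this
end

mutual
theorem eval_continuous : ∀ (t : LpTree), t.WF → Continuous (eval t)
  | .leaf, _ => by
      have : (eval .leaf) = fun x : ℕ → ℝ => |x 0| := by funext x; rfl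
      rw [this]; exact (continuous_apply 0).abs
  | .node p cs, hwf => by
      obtain ⟨hp, hcs, hw⟩ := wf_node_elim hwf
      have h1 : Continuous fun y : ℝ => y ^ ((1:ℝ)/p) :=
        continuous_iff_continuousAt.2 fun x =>
          Real.continuousAt_rpow_const x _ (Or.inr (by positivity))
      have : (eval (.node p cs)) = fun x => (evalSum p cs x) ^ ((1:ℝ)/p) := by
        funext x; rfl
      rw [this]
      exact h1.comp (evalSum_continuous p hp cs hw)
theorem evalSum_continuous : ∀ (p : ℝ), 0 < p → ∀ (cs : List LpTree), (∀ c ∈ cs, WF c) →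
    Continuous (evalSum p cs)
  | p, hp, [], _ => by
      have : (evalSum p []) = fun _ : ℕ → ℝ => (0:ℝ) := by funext x; rfl
      rw [this]; exact continuous_const
  | p, hp, t :: cs, hw => by
      have hpow : Continuous fun y : ℝ => y ^ p :=
        continuous_iff_continuousAt.2 fun x =>
          Real.continuousAt_rpow_const x _ (Or.inr hp.le)
      have h1 : Continuous fun x : ℕ → ℝ => (eval t x) ^ p :=
        hpow.comp (eval_continuous t (hw t (by simp)))
      have hshift : Continuous fun x : ℕ → ℝ => (fun i => x (i + t.numLeaves)) :=
        continuous_pi fun i => continuous_apply (i + t.numLeaves)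
      have h2 : Continuous fun x : ℕ → ℝ => evalSum p cs (fun i => x (i + t.numLeaves)) :=
        (evalSum_continuous p hp cs (fun c hc => hw c (by simp [hc]))).comp hshift
      have : (evalSum p (t :: cs)) = fun x =>
          (eval t x) ^ p + evalSum p cs (fun i => x (i + t.numLeaves)) := by
        funext x; rfl
      rw [this]
      exact h1.add h2
end

mutual
theorem numLeaves_pos : ∀ (t : LpTree), t.WF → 0 < t.numLeaves
  | .leaf, _ => Nat.one_pos
  | .node p cs, hwf => by
      obtain ⟨hp, hcs, hw⟩ := wf_node_elim hwf
      exact numLeavesList_pos cs hcs hw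
theorem numLeavesList_pos : ∀ (cs : List LpTree), cs ≠ [] → (∀ c ∈ cs, WF c) →
    0 < numLeavesList cs
  | [], h, _ => absurd rfl h
  | t :: cs, _, hw => by
      rw [numLeavesList]
      have := numLeaves_pos t (hw t (by simp))
      omega
end

theorem evalFin_nonneg (t : LpTree) (x : Fin t.numLeaves → ℝ) : 0 ≤ t.evalFin x :=
  eval_nonneg _ _

theorem evalFin_continuous {t : LpTree} (ht : t.WF) : Continuous t.evalFin := by
  apply (eval_continuous t ht).comp
  apply continuous_pi
  intro i
  by_cases h : i < t.numLeaves
  · simpa only [h, dif_pos] using continuous_apply (⟨i, h⟩ : Fin t.numLeaves)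
  · simpa only [h, dif_neg, not_false_iff] using continuous_const (y := (0:ℝ))

theorem evalFin_smul {t : LpTree} (ht : t.WF) {c : ℝ} (hc : 0 ≤ c) (x : Fin t.numLeaves → ℝ) :
    t.evalFin (c • x) = c * t.evalFin x := by
  unfold evalFin
  have h : (fun i => if h : i < t.numLeaves then (c • x) ⟨i, h⟩ else 0)
      = fun i => c * (if h : i < t.numLeaves then x ⟨i, h⟩ else 0) := by
    funext i
    by_cases h : i < t.numLeaves <;> simp [h]
  rw [h, eval_smul t ht c hc]

theorem evalFin_eq_zero {t : LpTree} (ht : t.WF) {x : Fin t.numLeaves → ℝ}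
    (h : t.evalFin x = 0) : x = 0 := by
  funext j
  have := eval_eq_zero t ht _ h j.1 j.2
  simpa [j.2] using this

theorem evalFin_zero {t : LpTree} (ht : t.WF) : t.evalFin (0 : Fin t.numLeaves → ℝ) = 0 := by
  have := evalFin_smul ht (le_refl (0:ℝ)) (0 : Fin t.numLeaves → ℝ)
  simpa using this

end LpTree

open Set Pointwise ENNReal NNReal

/-- Normalization of `L_p`-nested symmetric distributions: for an `L_p`-nested
function `f` on `ℝⁿ` and a probability density `ϱ` on `(0,∞)`,
`∫ ϱ(f(x)) f(x)^{1−n} dx = S_f(1)`, where `S_f(1) = n·V_f(1)` is the surface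
area of the unit `f`-sphere. -/
theorem LpTree.density_normalization (t : LpTree) (ht : t.WF)
    (ϱ : ℝ → ℝ) (hmeas : Measurable ϱ) (hnonneg : ∀ r, 0 ≤ ϱ r)
    (hsupp : ∀ r : ℝ, r ≤ 0 → ϱ r = 0) (hint : ∫ r : ℝ, ϱ r = 1) :
    ∫ x : Fin t.numLeaves → ℝ, ϱ (t.evalFin x) * t.evalFin x ^ ((1 : ℝ) - t.numLeaves) =
      t.numLeaves * (volume {x : Fin t.numLeaves → ℝ | t.evalFin x ≤ 1}).toReal := by
  classical
  set n := t.numLeaves with hn_def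
  set f := t.evalFin with hf_def
  have hn : 0 < n := numLeaves_pos t ht
  have hfc : Continuous f := evalFin_continuous ht
  have hfm : Measurable f := hfc.measurable
  have hf0 : ∀ x, 0 ≤ f x := evalFin_nonneg t
  set K : Set (Fin n → ℝ) := {x | f x ≤ 1} with hK_def
  set V : ℝ≥0∞ := volume K with hV_def
  haveI : Nonempty (Fin n) := ⟨⟨0, hn⟩⟩
  -- a positive lower bound on the unit sphere
  obtain ⟨x₀, hx₀, hmin⟩ : ∃ x₀ ∈ Metric.sphere (0 : Fin n → ℝ) 1,
      ∀ y ∈ Metric.sphere (0 : Fin n → ℝ) 1, f x₀ ≤ f y := by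
    obtain ⟨x₀, h1, h2⟩ := (isCompact_sphere (0 : Fin n → ℝ) 1).exists_isMinOn
      (NormedSpace.sphere_nonempty.mpr zero_le_one) hfc.continuousOn
    exact ⟨x₀, h1, fun y hy => h2 hy⟩
  have hε : 0 < f x₀ := by
    rcases (hf0 x₀).lt_or_eq with h | h
    · exact h
    · exfalso
      have h0 : x₀ = 0 := evalFin_eq_zero ht h.symm
      rw [h0] at hx₀
      simp at hx₀
  have hbound : ∀ x, f x₀ * ‖x‖ ≤ f x := by
    intro x
    rcases eq_or_ne x 0 with rfl | hx
    · simp [hf_def, evalFin_zero ht]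
    · have hnx : 0 < ‖x‖ := norm_pos_iff.mpr hx
      have hu : ‖x‖⁻¹ • x ∈ Metric.sphere (0 : Fin n → ℝ) 1 := by
        simp [norm_smul, abs_of_nonneg (inv_nonneg.mpr hnx.le), inv_mul_cancel₀ hnx.ne']
      have h1 := hmin _ hu
      have h2 : f (‖x‖ • (‖x‖⁻¹ • x)) = ‖x‖ * f (‖x‖⁻¹ • x) := evalFin_smul ht hnx.le _
      rw [smul_smul, mul_inv_cancel₀ hnx.ne', one_smul] at h2
      calc f x₀ * ‖x‖ = ‖x‖ * f x₀ := mul_comm _ _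
        _ ≤ ‖x‖ * f (‖x‖⁻¹ • x) := by nlinarith
        _ = f x := h2.symm
  have hVfin : V < ⊤ := by
    refine lt_of_le_of_lt (measure_mono ?_)
      (measure_closedBall_lt_top (x := (0 : Fin n → ℝ)) (r := (f x₀)⁻¹))
    intro x hx
    have hx1 : f x ≤ 1 := hx
    have h2 : f x₀ * ‖x‖ ≤ 1 := le_trans (hbound x) hx1
    simp only [Metric.mem_closedBall, dist_zero_right]
    nlinarith [mul_inv_cancel₀ hε.ne', norm_nonneg x, inv_pos.mpr hε]
  -- the zero sublevel set is null
  have h0null : volume {x : Fin n → ℝ | f x ≤ 0} = 0 := by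
    refine measure_mono_null (fun x hx => ?_) (measure_singleton (0 : Fin n → ℝ))
    have : f x = 0 := le_antisymm hx (hf0 x)
    simpa using evalFin_eq_zero ht this
  -- scaling of sublevel sets
  have hscale : ∀ r : ℝ, 0 ≤ r →
      volume {x : Fin n → ℝ | f x ≤ r} = ENNReal.ofReal (r ^ n) * V := by
    intro r hr
    rcases hr.lt_or_eq with hr | hr
    · have hset : {x : Fin n → ℝ | f x ≤ r} = r • K := by
        ext x
        rw [mem_smul_set_iff_inv_smul_mem₀ hr.ne']
        simp only [hK_def, Set.mem_setOf_eq, hf_def]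
        rw [evalFin_smul ht (inv_nonneg.mpr hr.le), inv_mul_le_iff₀ hr, mul_one]
      rw [hset, Measure.addHaar_smul_of_nonneg volume hr.le K, Module.finrank_fin_fun ℝ]
    · rw [← hr]
      rw [h0null, zero_pow hn.ne', ENNReal.ofReal_zero, zero_mul]
  -- pushforward measure
  set ν : Measure ℝ := Measure.map f volume with hν_def
  have hν_Ioc : ∀ a b : ℝ, a < b →
      ν (Ioc a b) = ENNReal.ofReal ((max b 0) ^ n - (max a 0) ^ n) * V := by
    intro a b hab
    rw [hν_def, Measure.map_apply hfm measurableSet_Ioc]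
    rcases le_or_gt b 0 with hb | hb
    · have hsub : f ⁻¹' Ioc a b ⊆ {x | f x ≤ 0} := fun x hx => le_trans hx.2 hb
      rw [measure_mono_null hsub h0null]
      simp [max_eq_right hb, max_eq_right (hab.le.trans hb)]
    · rcases le_or_gt 0 a with ha | ha
      · have hsub2 : {x : Fin n → ℝ | f x ≤ a} ⊆ {x | f x ≤ b} := fun x hx => le_trans hx hab.le
        have hpre : f ⁻¹' Ioc a b = {x : Fin n → ℝ | f x ≤ b} \ {x | f x ≤ a} := by
          ext x
          simp only [mem_preimage, mem_Ioc, mem_diff, mem_setOf_eq, not_le]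
          exact ⟨fun h => ⟨h.2, not_le.mpr h.1⟩, fun h => ⟨not_le.mp h.2, h.1⟩⟩
        rw [hpre, measure_diff hsub2 (measurableSet_le hfm measurable_const).nullMeasurableSet
            (by rw [hscale a ha]; exact ENNReal.mul_ne_top ENNReal.ofReal_ne_top hVfin.ne),
          hscale b (le_of_lt hb), hscale a ha,
          max_eq_left hb.le, max_eq_left ha,
          ← ENNReal.sub_mul (fun _ _ => hVfin.ne),
          ← ENNReal.ofReal_sub _ (pow_nonneg ha n)]
      · have hpre : f ⁻¹' Ioc a b = {x : Fin n → ℝ | f x ≤ b} := by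
          ext x
          simp only [mem_preimage, mem_Ioc, mem_setOf_eq]
          exact ⟨fun h => h.2, fun h => ⟨lt_of_lt_of_le ha (hf0 x), h⟩⟩
        rw [hpre, hscale b hb.le, max_eq_left hb.le, max_eq_right ha.le]
        simp [zero_pow hn.ne']
  -- the density
  set d : ℝ → ℝ≥0 := fun r =>
    Set.indicator (Ioi (0:ℝ)) (fun r => Real.toNNReal ((n * r ^ (n-1)) * V.toReal)) r with hd_def
  have hd_meas : Measurable d := by
    apply Measurable.indicator _ measurableSet_Ioi
    exact (((measurable_id.pow_const (n-1)).const_mul (n:ℝ)).mul_const V.toReal).real_toNNReal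
  have hμ₂_Ioc : ∀ a b : ℝ, a < b →
      (volume.withDensity fun r => (d r : ℝ≥0∞)) (Ioc a b)
        = ENNReal.ofReal ((max b 0) ^ n - (max a 0) ^ n) * V := by
    intro a b hab
    have ha' : (0:ℝ) ≤ max a 0 := le_max_right a 0
    have hab' : max a 0 ≤ max b 0 := max_le_max hab.le (le_refl 0)
    have hind : ∀ r : ℝ, ((d r : ℝ≥0∞)) = Set.indicator (Ioi (0:ℝ))
        (fun r => ENNReal.ofReal ((n * r ^ (n - 1)) * V.toReal)) r := by
      intro r
      by_cases hr : r ∈ Ioi (0:ℝ)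
      · simp only [hd_def, indicator_of_mem hr]; rfl
      · simp [hd_def, indicator_of_notMem hr]
    have hIoc : Ioi (0:ℝ) ∩ Ioc a b = Ioc (max a 0) (max b 0) := by
      ext r
      simp only [mem_inter_iff, mem_Ioi, mem_Ioc, max_lt_iff, le_max_iff]
      constructor
      · rintro ⟨h0, h1, h2⟩; exact ⟨⟨h1, h0⟩, Or.inl h2⟩
      · rintro ⟨⟨h1, h0⟩, h2⟩
        exact ⟨h0, h1, h2.resolve_right (by linarith)⟩
    have hInt : IntegrableOn (fun r : ℝ => ((n : ℝ) * r ^ (n-1)) * V.toReal)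
        (Ioc (max a 0) (max b 0)) volume :=
      (((continuous_const.mul (continuous_pow _)).mul continuous_const)).integrableOn_Ioc
    have hae : 0 ≤ᵐ[volume.restrict (Ioc (max a 0) (max b 0))]
        fun r : ℝ => ((n : ℝ) * r ^ (n-1)) * V.toReal := by
      filter_upwards [ae_restrict_mem measurableSet_Ioc] with r hr
      have h0r : (0:ℝ) ≤ r := le_trans ha' hr.1.le
      positivity
    have hval : ∫ r in Ioc (max a 0) (max b 0), ((n : ℝ) * r ^ (n-1)) * V.toReal
        = ((max b 0) ^ n - (max a 0) ^ n) * V.toReal := by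
      rw [MeasureTheory.integral_mul_const, ← intervalIntegral.integral_of_le hab',
        intervalIntegral.integral_const_mul, integral_pow, Nat.sub_add_cancel hn]
      have hn' : (n:ℝ) ≠ 0 := Nat.cast_ne_zero.mpr hn.ne'
      field_simp
      rw [Nat.cast_sub hn, Nat.cast_one, sub_add_cancel]
      ring
    calc (volume.withDensity fun r => (d r : ℝ≥0∞)) (Ioc a b)
        = ∫⁻ r in Ioc a b, (d r : ℝ≥0∞) := withDensity_apply _ measurableSet_Ioc
      _ = ∫⁻ r in Ioc a b, Set.indicator (Ioi (0:ℝ))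
            (fun r => ENNReal.ofReal ((n * r ^ (n - 1)) * V.toReal)) r := by
          simp_rw [hind]
      _ = ∫⁻ r in Ioi (0:ℝ) ∩ Ioc a b, ENNReal.ofReal ((n * r ^ (n - 1)) * V.toReal) := by
          rw [lintegral_indicator measurableSet_Ioi, Measure.restrict_restrict measurableSet_Ioi]
      _ = ENNReal.ofReal (((max b 0) ^ n - (max a 0) ^ n) * V.toReal) := by
          rw [hIoc, ← MeasureTheory.ofReal_integral_eq_lintegral_ofReal hInt hae, hval]
      _ = ENNReal.ofReal ((max b 0) ^ n - (max a 0) ^ n) * V := by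
          rw [ENNReal.ofReal_mul (sub_nonneg.mpr (pow_le_pow_left₀ ha' hab' n)),
            ENNReal.ofReal_toReal hVfin.ne]
  have hνeq : ν = volume.withDensity fun r => (d r : ℝ≥0∞) :=
    Measure.ext_of_Ioc' _ _
      (fun a b hab => by
        rw [hν_Ioc a b hab]
        exact ENNReal.mul_ne_top ENNReal.ofReal_ne_top hVfin.ne)
      (fun a b hab => by rw [hν_Ioc a b hab, hμ₂_Ioc a b hab])
  -- final computation
  set g : ℝ → ℝ := fun r => ϱ r * r ^ ((1:ℝ) - n) with hg_def
  have hg_meas : Measurable g := hmeas.mul (measurable_id.pow_const _)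
  have hkey : (fun r => d r • g r)
      = Set.indicator (Ioi (0:ℝ)) (fun r => ((n:ℝ) * V.toReal) * ϱ r) := by
    funext r
    by_cases hr : r ∈ Ioi (0:ℝ)
    · have hr0 : (0:ℝ) < r := hr
      have hpow : (r:ℝ) ^ (n-1 : ℕ) * r ^ ((1:ℝ) - n) = 1 := by
        rw [← Real.rpow_natCast r (n-1), ← Real.rpow_add hr0]
        push_cast [Nat.cast_sub hn]
        rw [show ((n:ℝ) - 1 + (1 - (n:ℝ))) = 0 by ring, Real.rpow_zero]
      simp only [hd_def, indicator_of_mem hr, hg_def]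
      rw [NNReal.smul_def, Real.coe_toNNReal _ (by positivity)]
      calc ((n:ℝ) * r ^ (n-1) * V.toReal) * (ϱ r * r ^ ((1:ℝ) - n))
          = ((n:ℝ) * V.toReal * ϱ r) * (r ^ (n-1:ℕ) * r ^ ((1:ℝ) - n)) := by ring
        _ = (n:ℝ) * V.toReal * ϱ r := by rw [hpow, mul_one]
    · simp [hd_def, indicator_of_notMem hr]
  calc ∫ x : Fin n → ℝ, ϱ (f x) * f x ^ ((1:ℝ) - n)
      = ∫ r, g r ∂ν := by
        rw [hν_def, integral_map hfm.aemeasurable hg_meas.aestronglyMeasurable]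
    _ = ∫ r, d r • g r := by
        rw [hνeq, integral_withDensity_eq_integral_smul hd_meas]
    _ = ∫ r in Ioi (0:ℝ), ((n:ℝ) * V.toReal) * ϱ r := by
        rw [hkey, integral_indicator measurableSet_Ioi]
    _ = ((n:ℝ) * V.toReal) * ∫ r in Ioi (0:ℝ), ϱ r := integral_const_mul _ _
    _ = ((n:ℝ) * V.toReal) * ∫ r, ϱ r := by
        rw [setIntegral_eq_integral_of_forall_compl_eq_zero (s := Ioi (0:ℝ)) (f := ϱ)
          (fun r hr => hsupp r (le_of_not_gt (fun h => hr (mem_Ioi.mpr h))))]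
    _ = (n:ℝ) * V.toReal := by rw [hint, mul_one]
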